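/- Under the stated setup and algorithmic hypotheses, f(A, Z, H) ≥ 0 whenever H ∈ S₂, and the series Σ_{k=0}^∞ (λ/2)(‖Z^{k+1} − Z^k‖² + ‖A^{k+1} − A^k‖²) converges with Σ_{k=0}^∞ (λ/2)(‖Z^{k+1} − Z^k‖² + ‖A^{k+1} − A^k‖²) ≤ f(A⁰, Z⁰, H⁰). -/

import Mathlib

/-!
Each block update of the alternating scheme decreases `f` by at least `(λ/2)` times the squared
step. For `H` this is plain minimality. In `A` and in `Z` the objective is `(λ/2)‖A - Z‖²` plus
convex terms, hence `λ`-strongly convex; the Laplacian term is convex in `Z` because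
`Tr(H L_Z Hᵀ) = Σ_{i,j} |z_ij| ‖h_i - h_j‖² / 2` (with `h_i` the columns of `H`) is a weighted
`ℓ¹`-norm of `Z`. A minimizer `x₀` of a `λ`-strongly convex function over a convex set satisfies
`f x₀ + (λ/2)‖x - x₀‖² ≤ f x`. Since `f ≥ 0`, the decreases telescope to a sum bounded by `f₀`.
-/

open Matrix BigOperators Filter Topology

/-- Frobenius norm of a real matrix. -/
noncomputable def frob {m n : ℕ} (W : Matrix (Fin m) (Fin n) ℝ) : ℝ :=
  Real.sqrt (∑ i, ∑ j, (W i j) ^ 2)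

/-- Laplacian `L_S = D_S - (|S| + |S|ᵀ)/2` of a square real matrix `S`. -/
noncomputable def lap {n : ℕ} (S : Matrix (Fin n) (Fin n) ℝ) : Matrix (Fin n) (Fin n) ℝ :=
  Matrix.diagonal (fun i => ∑ j, (|S i j| + |S j i|) / 2)
    - (1 / 2 : ℝ) • (S.map (fun x => |x|) + (S.map (fun x => |x|))ᵀ)

/-- The objective `f(A, Z, H)` of the penalized DGSL model. -/
noncomputable def fObj {n k d : ℕ} (X : Matrix (Fin d) (Fin n) ℝ)
    (W M C : Matrix (Fin n) (Fin n) ℝ) (lam lamZ lamM a1 a2 : ℝ)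
    (A Z : Matrix (Fin n) (Fin n) ℝ) (H : Matrix (Fin k) (Fin n) ℝ) : ℝ :=
  (1 / 2) * frob (X - X * A) ^ 2 + (lam / 2) * frob (A - Z) ^ 2
    + lamZ * (∑ i, ∑ j, |Z i j|)
    + a1 * trace (H * lap Z * Hᵀ) / trace (H * lap C * Hᵀ)
    + a2 * trace (H * (lap W + lamM • lap M) * Hᵀ) / trace (H * lap C * Hᵀ)

open Set

theorem StrongConvexOn.add_sq_norm_sub_le_of_isMinOn {E : Type*} [NormedAddCommGroup E]
    [NormedSpace ℝ E] {s : Set E} {m : ℝ} {f : E → ℝ} {x₀ x : E}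
    (hf : StrongConvexOn s m f) (hmin : IsMinOn f s x₀) (hx₀ : x₀ ∈ s) (hx : x ∈ s) :
    f x₀ + m / 2 * ‖x - x₀‖ ^ 2 ≤ f x := by
  set c := m / 2 * ‖x - x₀‖ ^ 2 with hc
  have hseg : ∀ t ∈ Ioo (0 : ℝ) 1, f x₀ + (1 - t) * c ≤ f x := by
    rintro t ⟨ht₀, ht₁⟩
    have hconv := hf.2 hx₀ hx (sub_pos.2 ht₁).le ht₀.le (sub_add_cancel 1 t)
    have hle := hmin (hf.1 hx₀ hx (sub_pos.2 ht₁).le ht₀.le (sub_add_cancel 1 t))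
    dsimp only at hconv
    rw [norm_sub_rev, ← hc] at hconv
    simp only [smul_eq_mul, mem_ofPred_eq] at hconv hle
    refine le_of_mul_le_mul_left ?_ ht₀
    linarith
  have hlim : Tendsto (fun t : ℝ => f x₀ + (1 - t) * c) (𝓝[>] 0) (𝓝 (f x₀ + c)) := by
    have : Continuous (fun t : ℝ => f x₀ + (1 - t) * c) := by fun_prop
    simpa using this.continuousWithinAt.tendsto (x := 0) (s := Ioi 0)
  exact le_of_tendsto hlim (eventually_of_mem (Ioo_mem_nhdsGT one_pos) hseg)

theorem StrongConvexOn.add_convexOn {E : Type*} [NormedAddCommGroup E] [NormedSpace ℝ E]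
    {s : Set E} {m : ℝ} {f g : E → ℝ} (hf : StrongConvexOn s m f) (hg : ConvexOn ℝ s g) :
    StrongConvexOn s m (f + g) := by
  have h := hf.add (uniformConvexOn_zero.2 hg)
  rwa [add_zero] at h

theorem summable_and_tsum_le_of_add_le {F u : ℕ → ℝ} (hF : ∀ t, 0 ≤ F t) (hu : ∀ t, 0 ≤ u t)
    (h : ∀ t, F (t + 1) + u t ≤ F t) : Summable u ∧ ∑' t, u t ≤ F 0 := by
  have hpartial (N : ℕ) : ∑ t ∈ Finset.range N, u t ≤ F 0 :=
    calc ∑ t ∈ Finset.range N, u t ≤ ∑ t ∈ Finset.range N, (F t - F (t + 1)) :=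
          Finset.sum_le_sum fun t _ => by linarith [h t]
      _ = F 0 - F N := Finset.sum_range_sub' F N
      _ ≤ F 0 := by linarith [hF N]
  have hsum := summable_of_sum_range_le hu hpartial
  exact ⟨hsum, hsum.tsum_le_of_sum_range_le hpartial⟩

section Laplacian

variable {n k : ℕ}

theorem lap_mulVec (S : Matrix (Fin n) (Fin n) ℝ) (v : Fin n → ℝ) (i : Fin n) :
    (lap S *ᵥ v) i = ∑ j, (|S i j| + |S j i|) / 2 * (v i - v j) := by
  rw [lap, sub_mulVec, Pi.sub_apply, mulVec_diagonal, Finset.sum_mul, mulVec, dotProduct,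
    ← Finset.sum_sub_distrib]
  refine Finset.sum_congr rfl fun j _ => ?_
  simp only [Matrix.smul_apply, Matrix.add_apply, map_apply, transpose_apply, smul_eq_mul]
  ring

theorem dotProduct_lap_mulVec (S : Matrix (Fin n) (Fin n) ℝ) (v : Fin n → ℝ) :
    v ⬝ᵥ (lap S *ᵥ v) = ∑ i, ∑ j, |S i j| * ((v i - v j) ^ 2 / 2) := by
  calc v ⬝ᵥ (lap S *ᵥ v)
      = ∑ i, ∑ j, (|S i j| / 2 * (v i * (v i - v j)) + |S j i| / 2 * (v i * (v i - v j))) := by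
        simp only [dotProduct, lap_mulVec, Finset.mul_sum]
        exact Finset.sum_congr rfl fun i _ => Finset.sum_congr rfl fun j _ => by ring
    _ = ∑ i, ∑ j, |S i j| / 2 * (v i * (v i - v j))
          + ∑ i, ∑ j, |S j i| / 2 * (v i * (v i - v j)) := by
        simp only [Finset.sum_add_distrib]
    _ = ∑ i, ∑ j, |S i j| / 2 * (v i * (v i - v j))
          + ∑ i, ∑ j, |S i j| / 2 * (v j * (v j - v i)) := by
        rw [Finset.sum_comm (f := fun i j => |S j i| / 2 * (v i * (v i - v j)))]
    _ = ∑ i, ∑ j, |S i j| * ((v i - v j) ^ 2 / 2) := by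
        simp only [← Finset.sum_add_distrib]
        exact Finset.sum_congr rfl fun i _ => Finset.sum_congr rfl fun j _ => by ring

theorem trace_mul_mul_transpose (H : Matrix (Fin k) (Fin n) ℝ) (L : Matrix (Fin n) (Fin n) ℝ) :
    trace (H * L * Hᵀ) = ∑ p, H p ⬝ᵥ (L *ᵥ H p) := by
  simp only [trace, diag, mul_apply, transpose_apply, dotProduct, mulVec, Finset.mul_sum,
    Finset.sum_mul]
  exact Finset.sum_congr rfl fun p _ => by rw [Finset.sum_comm]; simp only [mul_comm, mul_left_comm]

theorem trace_lap (S : Matrix (Fin n) (Fin n) ℝ) (H : Matrix (Fin k) (Fin n) ℝ) :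
    trace (H * lap S * Hᵀ) = ∑ i, ∑ j, |S i j| * ∑ p, (H p i - H p j) ^ 2 / 2 := by
  simp only [trace_mul_mul_transpose, dotProduct_lap_mulVec, Finset.mul_sum]
  rw [Finset.sum_comm]
  exact Finset.sum_congr rfl fun i _ => Finset.sum_comm

theorem trace_lap_nonneg (S : Matrix (Fin n) (Fin n) ℝ) (H : Matrix (Fin k) (Fin n) ℝ) :
    0 ≤ trace (H * lap S * Hᵀ) := by
  rw [trace_lap]; positivity

end Laplacian

theorem convexOn_sum_abs_mul {m n : ℕ} (w : Fin m → Fin n → ℝ) (hw : ∀ i j, 0 ≤ w i j) :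
    ConvexOn ℝ univ (fun Z : Matrix (Fin m) (Fin n) ℝ => ∑ i, ∑ j, |Z i j| * w i j) := by
  refine ⟨convex_univ, fun Z _ Z' _ a b ha hb _ => ?_⟩
  simp only [smul_eq_mul, Finset.mul_sum, ← Finset.sum_add_distrib]
  refine Finset.sum_le_sum fun i _ => Finset.sum_le_sum fun j _ => ?_
  have habs : |a * Z i j + b * Z' i j| ≤ a * |Z i j| + b * |Z' i j| := by
    simpa [abs_mul, abs_of_nonneg ha, abs_of_nonneg hb] using abs_add_le (a * Z i j) (b * Z' i j)
  simpa [Matrix.add_apply, Matrix.smul_apply, mul_assoc, add_mul] using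
    mul_le_mul_of_nonneg_right habs (hw i j)

theorem convexOn_trace_lap {n k : ℕ} (H : Matrix (Fin k) (Fin n) ℝ) :
    ConvexOn ℝ univ (fun Z : Matrix (Fin n) (Fin n) ℝ => trace (H * lap Z * Hᵀ)) := by
  simp_rw [trace_lap]
  exact convexOn_sum_abs_mul _ fun i j => by positivity

theorem convex_setOf_diag_eq_zero {n : ℕ} :
    Convex ℝ {Z : Matrix (Fin n) (Fin n) ℝ | ∀ i, Z i i = 0} := by
  intro Z hZ Z' hZ' a b _ _ _ i
  simp [hZ i, hZ' i]

section Frobenius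

attribute [local instance] Matrix.frobeniusNormedAddCommGroup Matrix.frobeniusNormedSpace

variable {m n : ℕ}

theorem frobenius_norm_sq (A : Matrix (Fin m) (Fin n) ℝ) : ‖A‖ ^ 2 = ∑ i, ∑ j, A i j ^ 2 := by
  rw [frobenius_norm_def, ← Real.sqrt_eq_rpow, Real.sq_sqrt (by positivity)]
  simp only [Real.rpow_two, Real.norm_eq_abs, sq_abs]

theorem frob_eq_norm (A : Matrix (Fin m) (Fin n) ℝ) : frob A = ‖A‖ := by
  rw [frob, ← frobenius_norm_sq, Real.sqrt_sq (norm_nonneg A)]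

theorem frobenius_norm_smul_add_smul_sq (U V : Matrix (Fin m) (Fin n) ℝ) {a b : ℝ}
    (hab : a + b = 1) :
    ‖a • U + b • V‖ ^ 2 = a * ‖U‖ ^ 2 + b * ‖V‖ ^ 2 - a * b * ‖U - V‖ ^ 2 := by
  simp only [frobenius_norm_sq, Finset.mul_sum, ← Finset.sum_sub_distrib,
    ← Finset.sum_add_distrib]
  refine Finset.sum_congr rfl fun i _ => Finset.sum_congr rfl fun j _ => ?_
  obtain rfl := eq_sub_of_add_eq hab
  simp only [Matrix.sub_apply, Matrix.add_apply, Matrix.smul_apply, smul_eq_mul]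
  ring

theorem strongConvexOn_sq_norm_sub {s : Set (Matrix (Fin m) (Fin n) ℝ)} (hs : Convex ℝ s)
    (c : ℝ) (B : Matrix (Fin m) (Fin n) ℝ) :
    StrongConvexOn s c (fun A => c / 2 * ‖A - B‖ ^ 2) := by
  refine ⟨hs, fun A _ A' _ a b _ _ hab => le_of_eq ?_⟩
  have hcomb : a • A + b • A' - B = a • (A - B) + b • (A' - B) := by
    conv_lhs => rw [← one_smul ℝ B, ← hab, add_smul]
    module
  dsimp only
  rw [hcomb, frobenius_norm_smul_add_smul_sq _ _ hab, sub_sub_sub_cancel_right]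
  simp only [smul_eq_mul]
  ring

theorem convexOn_sq_norm_sub_mul {d p : ℕ} (Y : Matrix (Fin d) (Fin p) ℝ)
    (X : Matrix (Fin d) (Fin n) ℝ) :
    ConvexOn ℝ univ (fun A : Matrix (Fin n) (Fin p) ℝ => ‖Y - X * A‖ ^ 2) := by
  refine ⟨convex_univ, fun A _ A' _ a b ha hb hab => ?_⟩
  have hcomb : Y - X * (a • A + b • A') = a • (Y - X * A) + b • (Y - X * A') := by
    rw [Matrix.mul_add, Matrix.mul_smul, Matrix.mul_smul]
    conv_lhs => rw [← one_smul ℝ Y, ← hab, add_smul]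
    module
  dsimp only
  rw [hcomb, frobenius_norm_smul_add_smul_sq _ _ hab]
  simp only [smul_eq_mul]
  nlinarith [mul_nonneg (mul_nonneg ha hb) (sq_nonneg ‖(Y - X * A) - (Y - X * A')‖)]

variable {k d : ℕ} (X : Matrix (Fin d) (Fin n) ℝ) (W M C : Matrix (Fin n) (Fin n) ℝ)
  (lam lamZ lamM a1 a2 : ℝ)

theorem fObj_nonneg (hlam : 0 ≤ lam) (hlamZ : 0 ≤ lamZ) (hlamM : 0 ≤ lamM) (ha1 : 0 ≤ a1)
    (ha2 : 0 ≤ a2) (A Z : Matrix (Fin n) (Fin n) ℝ) (H : Matrix (Fin k) (Fin n) ℝ) :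
    0 ≤ fObj X W M C lam lamZ lamM a1 a2 A Z H := by
  have hWM : 0 ≤ trace (H * (lap W + lamM • lap M) * Hᵀ) := by
    rw [Matrix.mul_add, Matrix.add_mul, Matrix.mul_smul, Matrix.smul_mul, trace_add, trace_smul]
    exact add_nonneg (trace_lap_nonneg W H) (smul_nonneg hlamM (trace_lap_nonneg M H))
  have hZ := trace_lap_nonneg Z H
  have hC := trace_lap_nonneg C H
  unfold fObj
  positivity

theorem strongConvexOn_fObj_A (Z : Matrix (Fin n) (Fin n) ℝ) (H : Matrix (Fin k) (Fin n) ℝ) :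
    StrongConvexOn univ lam (fun A => fObj X W M C lam lamZ lamM a1 a2 A Z H) := by
  have hrest : ConvexOn ℝ univ fun A : Matrix (Fin n) (Fin n) ℝ => (1 / 2 : ℝ) • ‖X - X * A‖ ^ 2
      + (lamZ * ∑ i, ∑ j, |Z i j| + a1 * trace (H * lap Z * Hᵀ) / trace (H * lap C * Hᵀ)
        + a2 * trace (H * (lap W + lamM • lap M) * Hᵀ) / trace (H * lap C * Hᵀ)) :=
    ((convexOn_sq_norm_sub_mul X X).smul (by norm_num)).add (convexOn_const _ convex_univ)
  convert (strongConvexOn_sq_norm_sub convex_univ lam Z).add_convexOn hrest using 1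
  funext A
  simp only [fObj, frob_eq_norm, Pi.add_apply, smul_eq_mul]
  ring

theorem strongConvexOn_fObj_Z (hlamZ : 0 ≤ lamZ) (ha1 : 0 ≤ a1) (A : Matrix (Fin n) (Fin n) ℝ)
    (H : Matrix (Fin k) (Fin n) ℝ) :
    StrongConvexOn {Z | ∀ i, Z i i = 0} lam (fun Z => fObj X W M C lam lamZ lamM a1 a2 A Z H) := by
  have hweight : 0 ≤ a1 / trace (H * lap C * Hᵀ) := div_nonneg ha1 (trace_lap_nonneg C H)
  have hrest : ConvexOn ℝ univ fun Z : Matrix (Fin n) (Fin n) ℝ =>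
      lamZ • (∑ i, ∑ j, |Z i j| * 1) + (a1 / trace (H * lap C * Hᵀ)) • trace (H * lap Z * Hᵀ)
        + ((1 / 2) * ‖X - X * A‖ ^ 2
          + a2 * trace (H * (lap W + lamM • lap M) * Hᵀ) / trace (H * lap C * Hᵀ)) :=
    (((convexOn_sum_abs_mul _ fun _ _ => zero_le_one).smul hlamZ).add
      ((convexOn_trace_lap H).smul hweight)).add (convexOn_const _ convex_univ)
  convert (strongConvexOn_sq_norm_sub convex_setOf_diag_eq_zero lam A).add_convexOn
    (hrest.subset (subset_univ _) convex_setOf_diag_eq_zero) using 1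
  funext Z
  simp only [fObj, frob_eq_norm, norm_sub_rev A Z, Pi.add_apply, smul_eq_mul, mul_one]
  ring

theorem fObj_sufficient_decrease (hlamZ : 0 ≤ lamZ) (ha1 : 0 ≤ a1)
    {A₀ A₁ Z₀ Z₁ : Matrix (Fin n) (Fin n) ℝ} {H₀ H₁ : Matrix (Fin k) (Fin n) ℝ}
    (hH : fObj X W M C lam lamZ lamM a1 a2 A₀ Z₀ H₁ ≤ fObj X W M C lam lamZ lamM a1 a2 A₀ Z₀ H₀)
    (hA : ∀ A, fObj X W M C lam lamZ lamM a1 a2 A₁ Z₀ H₁ ≤ fObj X W M C lam lamZ lamM a1 a2 A Z₀ H₁)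
    (hZ₀ : ∀ i, Z₀ i i = 0) (hZ₁ : ∀ i, Z₁ i i = 0)
    (hZ : ∀ Z : Matrix (Fin n) (Fin n) ℝ, (∀ i, Z i i = 0) →
      fObj X W M C lam lamZ lamM a1 a2 A₁ Z₁ H₁ ≤ fObj X W M C lam lamZ lamM a1 a2 A₁ Z H₁) :
    fObj X W M C lam lamZ lamM a1 a2 A₁ Z₁ H₁
        + lam / 2 * (frob (Z₁ - Z₀) ^ 2 + frob (A₁ - A₀) ^ 2)
      ≤ fObj X W M C lam lamZ lamM a1 a2 A₀ Z₀ H₀ := by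
  have hAgrowth := StrongConvexOn.add_sq_norm_sub_le_of_isMinOn
    (strongConvexOn_fObj_A X W M C lam lamZ lamM a1 a2 Z₀ H₁)
    (isMinOn_iff.2 fun A _ => hA A) (mem_univ A₁) (mem_univ A₀)
  have hZgrowth := StrongConvexOn.add_sq_norm_sub_le_of_isMinOn
    (strongConvexOn_fObj_Z X W M C lam lamZ lamM a1 a2 hlamZ ha1 A₁ H₁) (isMinOn_iff.2 hZ) hZ₁ hZ₀
  rw [frob_eq_norm, frob_eq_norm, norm_sub_rev Z₁, norm_sub_rev A₁]
  linarith

end Frobenius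

theorem dgsl_nonneg_and_summable_general (n k d : ℕ)
    (X : Matrix (Fin d) (Fin n) ℝ) (W M C : Matrix (Fin n) (Fin n) ℝ)
    (lam lamZ lamM a1 a2 : ℝ) (hlam : 0 < lam) (hlamZ : 0 < lamZ)
    (hlamM : 0 < lamM) (ha1 : 0 < a1) (ha2 : 0 < a2)
    (Aseq Zseq : ℕ → Matrix (Fin n) (Fin n) ℝ)
    (Hseq : ℕ → Matrix (Fin k) (Fin n) ℝ)
    (hZ0 : ∀ i, Zseq 0 i i = 0) (hH0 : Hseq 0 * (Hseq 0)ᵀ = 1)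
    (hHstep : ∀ t : ℕ, Hseq (t + 1) * (Hseq (t + 1))ᵀ = 1 ∧
      ∀ H : Matrix (Fin k) (Fin n) ℝ, H * Hᵀ = 1 →
        fObj X W M C lam lamZ lamM a1 a2 (Aseq t) (Zseq t) (Hseq (t + 1))
          ≤ fObj X W M C lam lamZ lamM a1 a2 (Aseq t) (Zseq t) H)
    (hAstep : ∀ (t : ℕ) (A : Matrix (Fin n) (Fin n) ℝ),
      fObj X W M C lam lamZ lamM a1 a2 (Aseq (t + 1)) (Zseq t) (Hseq (t + 1))
        ≤ fObj X W M C lam lamZ lamM a1 a2 A (Zseq t) (Hseq (t + 1)))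
    (hZstep : ∀ t : ℕ, (∀ i, Zseq (t + 1) i i = 0) ∧
      ∀ Z : Matrix (Fin n) (Fin n) ℝ, (∀ i, Z i i = 0) →
        fObj X W M C lam lamZ lamM a1 a2 (Aseq (t + 1)) (Zseq (t + 1)) (Hseq (t + 1))
          ≤ fObj X W M C lam lamZ lamM a1 a2 (Aseq (t + 1)) Z (Hseq (t + 1))) :
    (∀ (A Z : Matrix (Fin n) (Fin n) ℝ) (H : Matrix (Fin k) (Fin n) ℝ),
      H * Hᵀ = 1 → 0 ≤ fObj X W M C lam lamZ lamM a1 a2 A Z H) ∧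
    Summable (fun t : ℕ =>
      (lam / 2) * (frob (Zseq (t + 1) - Zseq t) ^ 2
        + frob (Aseq (t + 1) - Aseq t) ^ 2)) ∧
    ∑' t : ℕ, (lam / 2) * (frob (Zseq (t + 1) - Zseq t) ^ 2
        + frob (Aseq (t + 1) - Aseq t) ^ 2)
      ≤ fObj X W M C lam lamZ lamM a1 a2 (Aseq 0) (Zseq 0) (Hseq 0) := by
  have hnonneg (A Z : Matrix (Fin n) (Fin n) ℝ) (H : Matrix (Fin k) (Fin n) ℝ) :=
    fObj_nonneg X W M C lam lamZ lamM a1 a2 hlam.le hlamZ.le hlamM.le ha1.le ha2.le A Z H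
  have horth : ∀ t, Hseq t * (Hseq t)ᵀ = 1
    | 0 => hH0
    | t + 1 => (hHstep t).1
  have hdiag : ∀ t i, Zseq t i i = 0
    | 0 => hZ0
    | t + 1 => (hZstep t).1
  refine ⟨fun A Z H _ => hnonneg A Z H, summable_and_tsum_le_of_add_le
    (F := fun t => fObj X W M C lam lamZ lamM a1 a2 (Aseq t) (Zseq t) (Hseq t))
    (fun t => hnonneg _ _ _) (fun t => by positivity) fun t => ?_⟩
  exact fObj_sufficient_decrease X W M C lam lamZ lamM a1 a2 hlamZ.le ha1.le
    ((hHstep t).2 _ (horth t)) (hAstep t) (hdiag t) (hdiag (t + 1)) (hZstep t).2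

theorem dgsl_nonneg_and_summable (n k d : ℕ) (hn : 0 < n) (hk : 0 < k) (hd : 0 < d)
    (X : Matrix (Fin d) (Fin n) ℝ) (W M C : Matrix (Fin n) (Fin n) ℝ)
    (lam lamZ lamM a1 a2 : ℝ) (hlam : 0 < lam) (hlamZ : 0 < lamZ)
    (hlamM : 0 < lamM) (ha1 : 0 < a1) (ha2 : 0 < a2)
    (hC : ∀ H : Matrix (Fin k) (Fin n) ℝ, H * Hᵀ = 1 → 0 < trace (H * lap C * Hᵀ))
    (Aseq Zseq : ℕ → Matrix (Fin n) (Fin n) ℝ)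
    (Hseq : ℕ → Matrix (Fin k) (Fin n) ℝ)
    (hZ0 : ∀ i, Zseq 0 i i = 0) (hH0 : Hseq 0 * (Hseq 0)ᵀ = 1)
    (hHstep : ∀ t : ℕ, Hseq (t + 1) * (Hseq (t + 1))ᵀ = 1 ∧
      ∀ H : Matrix (Fin k) (Fin n) ℝ, H * Hᵀ = 1 →
        fObj X W M C lam lamZ lamM a1 a2 (Aseq t) (Zseq t) (Hseq (t + 1))
          ≤ fObj X W M C lam lamZ lamM a1 a2 (Aseq t) (Zseq t) H)
    (hAstep : ∀ (t : ℕ) (A : Matrix (Fin n) (Fin n) ℝ),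
      fObj X W M C lam lamZ lamM a1 a2 (Aseq (t + 1)) (Zseq t) (Hseq (t + 1))
        ≤ fObj X W M C lam lamZ lamM a1 a2 A (Zseq t) (Hseq (t + 1)))
    (hZstep : ∀ t : ℕ, (∀ i, Zseq (t + 1) i i = 0) ∧
      ∀ Z : Matrix (Fin n) (Fin n) ℝ, (∀ i, Z i i = 0) →
        fObj X W M C lam lamZ lamM a1 a2 (Aseq (t + 1)) (Zseq (t + 1)) (Hseq (t + 1))
          ≤ fObj X W M C lam lamZ lamM a1 a2 (Aseq (t + 1)) Z (Hseq (t + 1))) :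
    (∀ (A Z : Matrix (Fin n) (Fin n) ℝ) (H : Matrix (Fin k) (Fin n) ℝ),
      H * Hᵀ = 1 → 0 ≤ fObj X W M C lam lamZ lamM a1 a2 A Z H) ∧
    Summable (fun t : ℕ =>
      (lam / 2) * (frob (Zseq (t + 1) - Zseq t) ^ 2
        + frob (Aseq (t + 1) - Aseq t) ^ 2)) ∧
    ∑' t : ℕ, (lam / 2) * (frob (Zseq (t + 1) - Zseq t) ^ 2
        + frob (Aseq (t + 1) - Aseq t) ^ 2)
      ≤ fObj X W M C lam lamZ lamM a1 a2 (Aseq 0) (Zseq 0) (Hseq 0) :=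
  dgsl_nonneg_and_summable_general n k d X W M C lam lamZ lamM a1 a2 hlam hlamZ hlamM ha1 ha2 Aseq
    Zseq Hseq hZ0 hH0 hHstep hAstep hZstep
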